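/- Every multiplicative seminorm on ℤ bounded above by the usual archimedean absolute value is of one of the following forms: |·|_∞^ε for some ε ∈ [0,1], or |·|_p^ε for some prime p and ε ∈ [0,∞], where |·|^0 denotes the trivial absolute value (equal to 1 on nonzero integers) and |n|_p^∞ is defined to be 0 if p divides n and 1 otherwise. -/

import Mathlib

/-!
The kernel of `f` is a prime ideal of `ℤ`. If it is `(p)` for a prime `p`, then `f` is `1` on
integers prime to `p`: a seminorm is constant on cosets of its kernel, and by Fermat
`n ^ (p - 1) ≡ 1 [ZMOD p]`. If the kernel is zero, `f` is an absolute value on `ℤ`; it extends to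
`ℚ` by `a / b ↦ f a / f b`, and Ostrowski's theorem makes the extension trivial or a positive power
of `|·|_∞` or of some `|·|_p`. In the archimedean case `f 2 ≤ 2` bounds the exponent by `1`.
-/

namespace AbsoluteValue

variable {R K : Type*} [CommRing R] [Field K] [Algebra R K] [IsFractionRing R K]
  (v : AbsoluteValue R ℝ)

lemma div_eq_div_of_algebraMap_div_eq {a b c d : R} (hb : b ≠ 0) (hd : d ≠ 0)
    (h : algebraMap R K a / algebraMap R K b = algebraMap R K c / algebraMap R K d) :
    v a / v b = v c / v d := by
  rw [div_eq_div_iff (by simpa [IsFractionRing.to_map_eq_zero_iff] using hb)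
    (by simpa [IsFractionRing.to_map_eq_zero_iff] using hd), ← map_mul, ← map_mul] at h
  rw [div_eq_div_iff (v.pos hb).ne' (v.pos hd).ne', ← map_mul, ← map_mul,
    IsFractionRing.injective R K h]

lemma exists_eq_algebraMap_div [Nontrivial R] (z : K) :
    ∃ a b : R, b ≠ 0 ∧ algebraMap R K a / algebraMap R K b = z := by
  obtain ⟨a, b, hb, rfl⟩ := IsFractionRing.div_surjective (A := R) z
  exact ⟨a, b, nonZeroDivisors.ne_zero hb, rfl⟩

variable [IsDomain R]

variable (K) in
noncomputable def extendFractionRingFun (z : K) : ℝ :=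
  v (IsLocalization.sec (nonZeroDivisors R) z).1 / v (IsLocalization.sec (nonZeroDivisors R) z).2

lemma extendFractionRingFun_div (a : R) {b : R} (hb : b ≠ 0) :
    extendFractionRingFun K v (algebraMap R K a / algebraMap R K b) = v a / v b := by
  set z := algebraMap R K a / algebraMap R K b
  refine div_eq_div_of_algebraMap_div_eq (K := K) v
    (nonZeroDivisors.ne_zero (IsLocalization.sec (nonZeroDivisors R) z).2.2) hb ?_
  rw [← IsFractionRing.mk'_eq_div (K := K), IsLocalization.mk'_sec]

variable (K) in
noncomputable def extendFractionRing : AbsoluteValue K ℝ where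
  toFun := extendFractionRingFun K v
  map_mul' x y := by
    obtain ⟨a, b, hb, rfl⟩ := exists_eq_algebraMap_div (R := R) x
    obtain ⟨c, d, hd, rfl⟩ := exists_eq_algebraMap_div (R := R) y
    rw [div_mul_div_comm, ← map_mul, ← map_mul, extendFractionRingFun_div v _ (mul_ne_zero hb hd),
      extendFractionRingFun_div v _ hb, extendFractionRingFun_div v _ hd, map_mul, map_mul,
      div_mul_div_comm]
  nonneg' x := by
    obtain ⟨a, b, hb, rfl⟩ := exists_eq_algebraMap_div (R := R) x
    rw [extendFractionRingFun_div v _ hb]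
    positivity
  eq_zero' x := by
    obtain ⟨a, b, hb, rfl⟩ := exists_eq_algebraMap_div (R := R) x
    rw [extendFractionRingFun_div v _ hb]
    simp [hb]
  add_le' x y := by
    obtain ⟨a, b, hb, rfl⟩ := exists_eq_algebraMap_div (R := R) x
    obtain ⟨c, d, hd, rfl⟩ := exists_eq_algebraMap_div (R := R) y
    have hb' : algebraMap R K b ≠ 0 := by simpa [IsFractionRing.to_map_eq_zero_iff] using hb
    have hd' : algebraMap R K d ≠ 0 := by simpa [IsFractionRing.to_map_eq_zero_iff] using hd
    rw [div_add_div _ _ hb' hd', ← map_mul, ← map_mul, ← map_mul, ← map_add,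
      extendFractionRingFun_div v _ (mul_ne_zero hb hd), extendFractionRingFun_div v _ hb,
      extendFractionRingFun_div v _ hd, div_add_div _ _ (v.pos hb).ne' (v.pos hd).ne', map_mul]
    gcongr
    calc v (a * d + b * c) ≤ v (a * d) + v (b * c) := v.add_le _ _
      _ = v a * v d + v b * v c := by rw [map_mul, map_mul]

@[simp]
lemma extendFractionRing_algebraMap (a : R) : extendFractionRing K v (algebraMap R K a) = v a := by
  show extendFractionRingFun K v _ = _
  simpa using extendFractionRingFun_div (K := K) v a one_ne_zero

end AbsoluteValue

namespace MulRingSeminorm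

lemma apply_neg_of_map_mul {R : Type*} [Ring R] {f : R → ℝ} (hnn : ∀ x, 0 ≤ f x) (h1 : f 1 = 1)
    (hmul : ∀ x y, f (x * y) = f x * f y) (x : R) : f (-x) = f x := by
  have hsq : f (-1) * f (-1) = 1 := by rw [← hmul, neg_one_mul, neg_neg, h1]
  have hneg_one : f (-1) = 1 := by nlinarith [hnn (-1)]
  rw [← neg_one_mul, hmul, hneg_one, one_mul]

def ofMul {R : Type*} [Ring R] (f : R → ℝ) (hnn : ∀ x, 0 ≤ f x) (h0 : f 0 = 0) (h1 : f 1 = 1)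
    (hadd : ∀ x y, f (x + y) ≤ f x + f y) (hmul : ∀ x y, f (x * y) = f x * f y) :
    MulRingSeminorm R where
  toFun := f
  map_zero' := h0
  add_le' := hadd
  neg' := apply_neg_of_map_mul hnn h1 hmul
  map_one' := h1
  map_mul' := hmul

variable {R : Type*} [CommRing R] (v : MulRingSeminorm R)

def ker : Ideal R where
  carrier := {x | v x = 0}
  zero_mem' := map_zero v
  add_mem' {x y} (hx : v x = 0) (hy : v y = 0) :=
    le_antisymm (by simpa [hx, hy] using map_add_le_add v x y) (apply_nonneg v _)
  smul_mem' c x hx := by simp_all [smul_eq_mul, map_mul]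

@[simp]
lemma mem_ker {x : R} : x ∈ v.ker ↔ v x = 0 := Iff.rfl

instance isPrime_ker [Nontrivial R] : v.ker.IsPrime where
  ne_top' h := by simpa using (v.ker.eq_top_iff_one.mp h)
  mem_or_mem' {x y} h := by simpa [map_mul] using h

lemma apply_eq_of_sub_mem_ker {x y : R} (h : x - y ∈ v.ker) : v x = v y := by
  have := abs_sub_map_le_sub v x y
  rw [(mem_ker v).mp h] at this
  exact sub_eq_zero.mp (abs_nonpos_iff.mp this)

def toAbsoluteValue (hv : v.ker = ⊥) : AbsoluteValue R ℝ where
  toFun := v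
  map_mul' := map_mul v
  nonneg' := apply_nonneg v
  eq_zero' _ :=
    ⟨fun h => (Submodule.mem_bot R).mp (hv ▸ (mem_ker v).mpr h), fun h => h ▸ map_zero v⟩
  add_le' := map_add_le_add v

section Int

variable (v : MulRingSeminorm ℤ)

lemma exists_prime_apply_eq_zero (hker : v.ker ≠ ⊥) : ∃ p : ℕ, p.Prime ∧ v p = 0 := by
  set g := Submodule.IsPrincipal.generator v.ker
  have hg : Prime g := Submodule.IsPrincipal.prime_generator_of_isPrime v.ker hker
  refine ⟨g.natAbs, Int.prime_iff_natAbs_prime.mp hg, ?_⟩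
  have hvg : v g = 0 := Submodule.IsPrincipal.generator_mem v.ker
  rcases abs_choice g with h | h <;> simp [h, hvg]

lemma apply_eq_ite_dvd {p : ℕ} (hp : p.Prime) (hvp : v p = 0) (n : ℤ) :
    v n = if (p : ℤ) ∣ n then 0 else 1 := by
  split_ifs with hpn
  · exact v.ker.mem_of_dvd hpn hvp
  · have hcop : IsCoprime n p := ((Nat.prime_iff_prime_int.mp hp).coprime_iff_not_dvd.mpr hpn).symm
    have hfermat : n ^ (p - 1) - 1 ∈ v.ker :=
      v.ker.mem_of_dvd (Int.ModEq.pow_card_sub_one_eq_one hp hcop).symm.dvd hvp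
    have hpow : v n ^ (p - 1) = 1 := by
      rw [← map_pow, v.apply_eq_of_sub_mem_ker hfermat, map_one]
    exact (pow_eq_one_iff_of_nonneg (apply_nonneg v n) (by have := hp.two_le; omega)).mp hpow

end Int

end MulRingSeminorm

lemma AbsoluteValue.exists_eq_rpow_of_isEquiv {F : Type*} [Field F] {v w : AbsoluteValue F ℝ}
    (h : v.IsEquiv w) : ∃ ε : ℝ, 0 < ε ∧ ∀ x, v x = w x ^ ε := by
  obtain ⟨c, hc, hcw⟩ := AbsoluteValue.isEquiv_iff_exists_rpow_eq.mp h
  exact ⟨c⁻¹, inv_pos.mpr hc, fun x => by rw [← hcw, Real.rpow_rpow_inv (v.nonneg x) hc.ne']⟩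

lemma Rat.AbsoluteValue.padic_intCast (p : ℕ) [Fact p.Prime] {n : ℤ} (hn : n ≠ 0) :
    padic p n = (p : ℝ) ^ (-(padicValInt p n : ℝ)) := by
  rw [padic_eq_padicNorm, padicNorm.eq_zpow_of_nonzero (Int.cast_ne_zero.mpr hn),
    padicValRat.of_int, Rat.cast_zpow, Rat.cast_natCast, ← Real.rpow_intCast, Int.cast_neg,
    Int.cast_natCast]

open Classical in
/-- Ostrowski-type classification of the points of the Berkovich spectrum `M(ℤ)`:
every multiplicative seminorm on `ℤ` bounded by the archimedean absolute value is
either `|·|_∞^ε` for some `ε ∈ [0,1]`, or `|·|_p^ε` for some prime `p` and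
`ε ∈ [0,∞]`, where `ε = ∞` gives the seminorm which is `0` on multiples of `p`
and `1` elsewhere. -/
theorem berkovich_spectrum_int_classification (f : ℤ → ℝ)
    (hnn : ∀ n, 0 ≤ f n) (h0 : f 0 = 0) (h1 : f 1 = 1)
    (hadd : ∀ m n, f (m + n) ≤ f m + f n)
    (hmul : ∀ m n, f (m * n) = f m * f n)
    (hb : ∀ n : ℤ, f n ≤ |(n : ℝ)|) :
    (∃ ε : ℝ, ε ∈ Set.Icc (0 : ℝ) 1 ∧ ∀ n : ℤ, n ≠ 0 → f n = |(n : ℝ)| ^ ε) ∨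
    (∃ p : ℕ, p.Prime ∧
      ((∃ ε : ℝ, 0 ≤ ε ∧
          ∀ n : ℤ, n ≠ 0 → f n = (p : ℝ) ^ (-(ε * (padicValInt p n : ℝ)))) ∨
        (∀ n : ℤ, n ≠ 0 → f n = if (p : ℤ) ∣ n then 0 else 1))) := by
  set v := MulRingSeminorm.ofMul f hnn h0 h1 hadd hmul
  obtain hker | hker := ne_or_eq v.ker ⊥
  · obtain ⟨p, hp, hvp⟩ := v.exists_prime_apply_eq_zero hker
    exact Or.inr ⟨p, hp, Or.inr fun n _ => v.apply_eq_ite_dvd hp hvp n⟩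
  set w := (v.toAbsoluteValue hker).extendFractionRing ℚ
  have hw (n : ℤ) : w n = f n := by
    rw [← eq_intCast (algebraMap ℤ ℚ)]
    exact AbsoluteValue.extendFractionRing_algebraMap _ n
  by_cases hnt : w.IsNontrivial
  · rcases Rat.AbsoluteValue.equiv_real_or_padic w hnt with hreal | ⟨p, ⟨hp, hpadic⟩, -⟩
    · obtain ⟨ε, hε, hwε⟩ := AbsoluteValue.exists_eq_rpow_of_isEquiv hreal
      have hf (n : ℤ) : f n = |(n : ℝ)| ^ ε := by
        rw [← hw, hwε, Rat.AbsoluteValue.real_eq_abs, Rat.cast_abs, Rat.cast_intCast]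
      have hε1 : (2 : ℝ) ^ ε ≤ 2 ^ (1 : ℝ) := by simpa [hf] using hb 2
      exact Or.inl ⟨ε, ⟨hε.le, (Real.rpow_le_rpow_left_iff one_lt_two).mp hε1⟩, fun n _ => hf n⟩
    · obtain ⟨ε, hε, hwε⟩ := AbsoluteValue.exists_eq_rpow_of_isEquiv hpadic
      refine Or.inr ⟨p, hp.out, Or.inl ⟨ε, hε.le, fun n hn => ?_⟩⟩
      rw [← hw, hwε, Rat.AbsoluteValue.padic_intCast p hn, ← Real.rpow_mul (Nat.cast_nonneg p)]
      ring_nf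
  · refine Or.inl ⟨0, ⟨le_rfl, zero_le_one⟩, fun n hn => ?_⟩
    simp only [AbsoluteValue.IsNontrivial, not_exists, not_and, not_not] at hnt
    rw [← hw, hnt n (Int.cast_ne_zero.mpr hn), Real.rpow_zero]
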